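/- arXiv:2312.05382 — 2 statements merged into one kernel-verified Lean document; each statement's English description precedes it below -/
import Mathlib

section
/- Let N, n be positive integers with N ≤ n, let d be a natural number with d + 1 ≤ N, let T > 0 and t₀ ∈ ℝ with 0 ≤ t₀ and t₀ + NT/n ≤ T. In the filter setting, suppose y : ℝ → ℝ is (d+1)-times differentiable on [t₀, t₀ + NT/n] with |y^{(d+1)}(t)| ≤ M for all t in that interval, and suppose the random observations satisfy E z_j = y(t₀ + jT/n) for j = 1, …, N. Then the derivative estimator x̂ = C Σ_{j=1}^N ρ_j p(j/N) z_j with C = d! n^d / (N^{d+1} T^d h) satisfies |E x̂ − y^{(d)}(t₀)| ≤ (M T/(d+1)) · (N/n) · (g/|h|). -/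
/-!
Put `L = N T / n`, so that the observation points are `t₀ + (j / N) L`. Expanding `y` there by
Taylor's formula of order `d` at `t₀`, the weights `ρ_j p(j/N)` annihilate every monomial
`(j/N)^k` with `k < d`, so the Taylor polynomials contribute exactly `L^d / d! · N h · y⁽ᵈ⁾(t₀)`,
which the normalisation `C` turns into `y⁽ᵈ⁾(t₀)`. The bias is thus `C` times the weighted sum of
the Taylor remainders, each at most `M L^(d+1) / (d+1)!`.
-/

open MeasureTheory ProbabilityTheory Real Finset

-- Unlike `taylor_mean_remainder_bound`, this needs no continuity of `f⁽ⁿ⁺¹⁾` and keeps `(n+1)!`.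
open Set Nat in
theorem norm_sub_taylorWithinEval_le {E : Type*} [NormedAddCommGroup E] [NormedSpace ℝ E]
    {f : ℝ → E} {a b M x : ℝ} {n : ℕ} (hab : a < b) (hf : ContDiffOn ℝ n f (Icc a b))
    (hf' : DifferentiableOn ℝ (iteratedDerivWithin n f (Icc a b)) (Icc a b))
    (hM : ∀ y ∈ Icc a b, ‖iteratedDerivWithin (n + 1) f (Icc a b) y‖ ≤ M)
    (hx : x ∈ Icc a b) :
    ‖f x - taylorWithinEval f n (Icc a b) a x‖ ≤ M * (x - a) ^ (n + 1) / (n + 1)! := by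
  have hxb : Icc a x ⊆ Icc a b := Icc_subset_Icc_right hx.2
  have hderiv := fun t (ht : t ∈ Icc a x) =>
    hasDerivWithinAt_taylorWithinEval_at_Icc x hab (hxb ht) hf hf'
  -- Fence `y ↦ P_y(x) - P_a(x)` (`P_y` the Taylor polynomial at `y`, so `P_x(x) = f x`) by
  -- `M ((x - a)^(n+1) - (x - y)^(n+1)) / (n+1)!`, whose derivative dominates that of `P_y(x)`.
  have key := image_norm_le_of_norm_deriv_right_le_deriv_boundary
    (f := fun y => taylorWithinEval f n (Icc a b) y x - taylorWithinEval f n (Icc a b) a x)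
    (B := fun y => M * ((x - a) ^ (n + 1) - (x - y) ^ (n + 1)) / (n + 1)!)
    (B' := fun y => M * (x - y) ^ n / n !)
    (fun t ht => ((hderiv t ht).continuousWithinAt.mono hxb).sub continuousWithinAt_const)
    (fun t ht => ((hderiv t (Ico_subset_Icc_self ht)).mono_of_mem_nhdsWithin
      (Icc_mem_nhdsGE_of_mem ⟨ht.1, ht.2.trans_le hx.2⟩)).sub_const _)
    (by simp)
    (fun t => by
      refine ((((hasDerivAt_id' t).const_sub x).pow (n + 1)).const_sub
        ((x - a) ^ (n + 1)) |>.const_mul M |>.div_const ((n + 1)! : ℝ)).congr_deriv ?_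
      push_cast [factorial_succ]
      field_simp)
    (fun t ht => by
      rw [norm_smul, norm_mul, norm_inv, norm_pow, Real.norm_of_nonneg (sub_nonneg.2 ht.2.le),
        Real.norm_natCast, div_eq_inv_mul, mul_comm M, mul_assoc]
      gcongr
      · exact pow_nonneg (sub_nonneg.2 ht.2.le) _
      · exact hM t (hxb (Ico_subset_Icc_self ht)))
    (right_mem_Icc.2 hx.1)
  simpa [taylorWithinEval_self, norm_sub_rev] using key

theorem sum_mul_sum_range_mul_pow_of_orthogonal {ι : Type*} (s : Finset ι) (w x : ι → ℝ)
    (c : ℕ → ℝ) {d : ℕ} (horth : ∀ k < d, ∑ j ∈ s, w j * x j ^ k = 0) :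
    ∑ j ∈ s, w j * ∑ k ∈ range (d + 1), c k * x j ^ k = c d * ∑ j ∈ s, w j * x j ^ d := by
  have hlow : ∀ k ∈ range d, ∑ j ∈ s, w j * (c k * x j ^ k) = 0 := fun k hk => by
    simp_rw [mul_left_comm (w _), ← mul_sum, horth k (mem_range.1 hk), mul_zero]
  simp_rw [mul_sum]
  rw [sum_comm, sum_range_succ, sum_eq_zero hlow, zero_add]
  exact sum_congr rfl fun j _ => mul_left_comm _ _ _

section WeightedTaylor

open Nat

variable {ι : Type*} (s : Finset ι) (w x : ι → ℝ) {f : ℝ → ℝ} {a L M : ℝ} {d : ℕ}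

theorem abs_sum_mul_sub_iteratedDerivWithin_le_of_orthogonal (hL : 0 < L)
    (hx : ∀ j ∈ s, x j ∈ Set.Icc 0 1) (horth : ∀ k < d, ∑ j ∈ s, w j * x j ^ k = 0)
    (hf : ContDiffOn ℝ d f (Set.Icc a (a + L)))
    (hf' : DifferentiableOn ℝ (iteratedDerivWithin d f (Set.Icc a (a + L))) (Set.Icc a (a + L)))
    (hM : ∀ t ∈ Set.Icc a (a + L), |iteratedDerivWithin (d + 1) f (Set.Icc a (a + L)) t| ≤ M) :
    |∑ j ∈ s, w j * f (a + x j * L)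
        - L ^ d / d ! * (∑ j ∈ s, w j * x j ^ d) * iteratedDerivWithin d f (Set.Icc a (a + L)) a|
      ≤ (∑ j ∈ s, |w j|) * (M * L ^ (d + 1) / (d + 1)!) := by
  set P := taylorWithinEval f d (Set.Icc a (a + L)) a with hP_def
  have hM₀ : 0 ≤ M := (abs_nonneg _).trans (hM a (Set.left_mem_Icc.2 (by linarith)))
  have hP : ∀ j, P (a + x j * L) = ∑ k ∈ range (d + 1),
      L ^ k / k ! * iteratedDerivWithin k f (Set.Icc a (a + L)) a * x j ^ k := fun j => by
    rw [hP_def, taylor_within_apply]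
    refine sum_congr rfl fun k _ => ?_
    rw [smul_eq_mul, add_sub_cancel_left]
    ring
  have hrem : ∀ j ∈ s, |f (a + x j * L) - P (a + x j * L)| ≤ M * L ^ (d + 1) / (d + 1)! := by
    intro j hj
    obtain ⟨hx₀, hx₁⟩ := hx j hj
    have hnode : a + x j * L ∈ Set.Icc a (a + L) :=
      ⟨by nlinarith, by nlinarith⟩
    refine (norm_sub_taylorWithinEval_le (by linarith) hf hf' hM hnode).trans ?_
    rw [add_sub_cancel_left]
    gcongr
    nlinarith
  have hsplit : ∑ j ∈ s, w j * f (a + x j * L)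
        - L ^ d / d ! * (∑ j ∈ s, w j * x j ^ d) * iteratedDerivWithin d f (Set.Icc a (a + L)) a
      = ∑ j ∈ s, w j * (f (a + x j * L) - P (a + x j * L)) := by
    simp_rw [hP, mul_sub, sum_sub_distrib, sum_mul_sum_range_mul_pow_of_orthogonal s w x _ horth]
    ring
  calc _ = |∑ j ∈ s, w j * (f (a + x j * L) - P (a + x j * L))| := by rw [hsplit]
    _ ≤ ∑ j ∈ s, |w j| * |f (a + x j * L) - P (a + x j * L)| := by
      simpa only [abs_mul] using
        abs_sum_le_sum_abs (fun j => w j * (f (a + x j * L) - P (a + x j * L))) s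
    _ ≤ ∑ j ∈ s, |w j| * (M * L ^ (d + 1) / (d + 1)!) :=
      sum_le_sum fun j hj => mul_le_mul_of_nonneg_left (hrem j hj) (abs_nonneg _)
    _ = _ := (sum_mul ..).symm

theorem abs_mul_sum_sub_iteratedDerivWithin_le_of_orthogonal {C : ℝ} (hL : 0 < L)
    (hx : ∀ j ∈ s, x j ∈ Set.Icc 0 1) (horth : ∀ k < d, ∑ j ∈ s, w j * x j ^ k = 0)
    (hf : ContDiffOn ℝ d f (Set.Icc a (a + L)))
    (hf' : DifferentiableOn ℝ (iteratedDerivWithin d f (Set.Icc a (a + L))) (Set.Icc a (a + L)))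
    (hM : ∀ t ∈ Set.Icc a (a + L), |iteratedDerivWithin (d + 1) f (Set.Icc a (a + L)) t| ≤ M)
    (hC : C * (L ^ d / d ! * ∑ j ∈ s, w j * x j ^ d) = 1) :
    |C * ∑ j ∈ s, w j * f (a + x j * L) - iteratedDerivWithin d f (Set.Icc a (a + L)) a|
      ≤ |C| * ((∑ j ∈ s, |w j|) * (M * L ^ (d + 1) / (d + 1)!)) := by
  set D := iteratedDerivWithin d f (Set.Icc a (a + L)) a
  have hsplit : C * ∑ j ∈ s, w j * f (a + x j * L) - D
      = C * (∑ j ∈ s, w j * f (a + x j * L) - L ^ d / d ! * (∑ j ∈ s, w j * x j ^ d) * D) := by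
    rw [mul_sub, ← mul_assoc, hC, one_mul]
  rw [hsplit, abs_mul]
  gcongr
  exact abs_sum_mul_sub_iteratedDerivWithin_le_of_orthogonal s w x hL hx horth hf hf' hM

end WeightedTaylor

theorem bias_of_estimated_derivative_general
    {Ω : Type*} [MeasurableSpace Ω] (μ : Measure Ω)
    (N n : ℕ) (hN : 0 < N) (hNn : N ≤ n)
    (d : ℕ)
    (T : ℝ) (hT : 0 < T) (t₀ : ℝ)
    -- filter setting
    (ρ : ℕ → ℝ) (hρ : ∀ j ∈ Finset.Icc 1 N, 0 < ρ j)
    (p : Polynomial ℝ)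
    (horth : ∀ k < d,
      (1 / N : ℝ) * ∑ j ∈ Finset.Icc 1 N,
        ρ j * p.eval ((j : ℝ) / N) * ((j : ℝ) / N) ^ k = 0)
    (H G : ℝ)
    (hH : H = (1 / N : ℝ) * ∑ j ∈ Finset.Icc 1 N,
        ρ j * p.eval ((j : ℝ) / N) * ((j : ℝ) / N) ^ d)
    (hHne : H ≠ 0)
    (hG : G = (1 / N : ℝ) * ∑ j ∈ Finset.Icc 1 N, ρ j * |p.eval ((j : ℝ) / N)|)
    -- regularity of y on the window
    (y : ℝ → ℝ) (M : ℝ)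
    (hy : ∀ k ≤ d, ∀ t ∈ Set.Icc t₀ (t₀ + N * T / n),
      DifferentiableWithinAt ℝ
        (iteratedDerivWithin k y (Set.Icc t₀ (t₀ + N * T / n)))
        (Set.Icc t₀ (t₀ + N * T / n)) t)
    (hM : ∀ t ∈ Set.Icc t₀ (t₀ + N * T / n),
      |iteratedDerivWithin (d + 1) y (Set.Icc t₀ (t₀ + N * T / n)) t| ≤ M)
    -- observations
    (z : ℕ → Ω → ℝ) (hzint : ∀ j ∈ Finset.Icc 1 N, Integrable (z j) μ)
    (hzmean : ∀ j ∈ Finset.Icc 1 N, ∫ ω, z j ω ∂μ = y (t₀ + j * T / n))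
    -- the estimator
    (C : ℝ) (hC : C = (d.factorial : ℝ) * n ^ d / (N ^ (d + 1) * T ^ d * H))
    (xhat : Ω → ℝ)
    (hxhat : xhat = fun ω => C * ∑ j ∈ Finset.Icc 1 N, ρ j * p.eval ((j : ℝ) / N) * z j ω) :
    |(∫ ω, xhat ω ∂μ) - iteratedDerivWithin d y (Set.Icc t₀ (t₀ + N * T / n)) t₀|
      ≤ (M * T / (d + 1)) * ((N : ℝ) / n) * (G / |H|) := by
  have hN' : (0 : ℝ) < N := Nat.cast_pos.2 hN
  have hn : (0 : ℝ) < n := Nat.cast_pos.2 (hN.trans_le hNn)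
  set L : ℝ := N * T / n with hL
  have hmean : ∫ ω, xhat ω ∂μ
      = C * ∑ j ∈ Icc 1 N, ρ j * p.eval ((j : ℝ) / N) * y (t₀ + (j / N : ℝ) * L) := by
    rw [hxhat, integral_const_mul, integral_finsetSum _ fun j hj => (hzint j hj).const_mul _]
    refine congrArg _ (sum_congr rfl fun j hj => ?_)
    rw [integral_const_mul, hzmean j hj, hL]
    congr 2
    field_simp
  have hSd : ∑ j ∈ Icc 1 N, ρ j * p.eval ((j : ℝ) / N) * ((j : ℝ) / N) ^ d = N * H := by
    rw [hH, one_div, mul_inv_cancel_left₀ hN'.ne']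
  have hSabs : ∑ j ∈ Icc 1 N, |ρ j * p.eval ((j : ℝ) / N)| = N * G := by
    rw [hG, one_div, mul_inv_cancel_left₀ hN'.ne']
    exact sum_congr rfl fun j hj => by rw [abs_mul, abs_of_pos (hρ j hj)]
  have key := abs_mul_sum_sub_iteratedDerivWithin_le_of_orthogonal (C := C) (Icc 1 N)
    (fun j => ρ j * p.eval ((j : ℝ) / N)) (fun j => (j / N : ℝ)) (by positivity)
    (fun j hj => ⟨by positivity, div_le_one_of_le₀ (Nat.cast_le.2 (mem_Icc.1 hj).2) hN'.le⟩)
    (fun k hk => (mul_eq_zero.1 (horth k hk)).resolve_left (by positivity))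
    (contDiffOn_of_differentiableOn_deriv fun k hk => hy k (mod_cast hk))
    (hy d le_rfl) hM
    (by rw [hSd, hC, hL, div_pow, mul_pow]; field_simp; ring)
  rw [hmean]
  refine key.trans_eq ?_
  rw [hSabs, hC, hL, Nat.factorial_succ, div_pow, mul_pow]
  simp only [abs_div, abs_mul, abs_pow, Nat.abs_cast, abs_of_pos hT]
  push_cast
  field_simp
  ring

/-- Bias of the estimated derivative (Lemma: diff-bias). -/
theorem bias_of_estimated_derivative
    {Ω : Type*} [MeasurableSpace Ω] (μ : Measure Ω) [IsProbabilityMeasure μ]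
    (N n : ℕ) (hN : 0 < N) (hNn : N ≤ n)
    (d : ℕ) (hd : d + 1 ≤ N)
    (T : ℝ) (hT : 0 < T) (t₀ : ℝ) (ht₀ : 0 ≤ t₀) (ht₁ : t₀ + N * T / n ≤ T)
    -- filter setting
    (ρ : ℕ → ℝ) (hρ : ∀ j ∈ Finset.Icc 1 N, 0 < ρ j)
    (p : Polynomial ℝ) (hp : p.degree = d)
    (horth : ∀ k < d,
      (1 / N : ℝ) * ∑ j ∈ Finset.Icc 1 N,
        ρ j * p.eval ((j : ℝ) / N) * ((j : ℝ) / N) ^ k = 0)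
    (H G : ℝ)
    (hH : H = (1 / N : ℝ) * ∑ j ∈ Finset.Icc 1 N,
        ρ j * p.eval ((j : ℝ) / N) * ((j : ℝ) / N) ^ d)
    (hHne : H ≠ 0)
    (hG : G = (1 / N : ℝ) * ∑ j ∈ Finset.Icc 1 N, ρ j * |p.eval ((j : ℝ) / N)|)
    -- regularity of y on the window
    (y : ℝ → ℝ) (M : ℝ)
    (hy : ∀ k ≤ d, ∀ t ∈ Set.Icc t₀ (t₀ + N * T / n),
      DifferentiableWithinAt ℝ
        (iteratedDerivWithin k y (Set.Icc t₀ (t₀ + N * T / n)))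
        (Set.Icc t₀ (t₀ + N * T / n)) t)
    (hM : ∀ t ∈ Set.Icc t₀ (t₀ + N * T / n),
      |iteratedDerivWithin (d + 1) y (Set.Icc t₀ (t₀ + N * T / n)) t| ≤ M)
    -- observations
    (z : ℕ → Ω → ℝ) (hzint : ∀ j ∈ Finset.Icc 1 N, Integrable (z j) μ)
    (hzmean : ∀ j ∈ Finset.Icc 1 N, ∫ ω, z j ω ∂μ = y (t₀ + j * T / n))
    -- the estimator
    (C : ℝ) (hC : C = (d.factorial : ℝ) * n ^ d / (N ^ (d + 1) * T ^ d * H))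
    (xhat : Ω → ℝ)
    (hxhat : xhat = fun ω => C * ∑ j ∈ Finset.Icc 1 N, ρ j * p.eval ((j : ℝ) / N) * z j ω) :
    |(∫ ω, xhat ω ∂μ) - iteratedDerivWithin d y (Set.Icc t₀ (t₀ + N * T / n)) t₀|
      ≤ (M * T / (d + 1)) * ((N : ℝ) / n) * (G / |H|) :=
  bias_of_estimated_derivative_general μ N n hN hNn d T hT t₀ ρ hρ p horth H G hH hHne hG y M hy hM
    z hzint hzmean C hC xhat hxhat
end

section
/- Let N, n be positive integers with N ≤ n, let d be a natural number with d + 1 ≤ N, let T > 0 and t₀ ∈ ℝ with 0 ≤ t₀ and t₀ + NT/n ≤ T. In the filter setting, suppose y : ℝ → ℝ is (d+1)-times differentiable on [t₀, t₀ + NT/n] with |y^{(d+1)}(t)| ≤ M there, and z_j = y(t₀ + jT/n) + w_j where w_1, …, w_N are independent square-integrable real random variables with E w_j = 0. Set s² = (1/N) Σ_{j=1}^N ρ_j² p(j/N)² Var(w_j). Then the derivative estimator x̂ = C Σ_{j=1}^N ρ_j p(j/N) z_j with C = d! n^d / (N^{d+1} T^d h) satisfies the mean-squared-error bound E (x̂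 − y^{(d)}(t₀))² ≤ A · N²/n² + B · n^{2d}/N^{2d+1}, where A = (M T/(d+1))² (g/h)² and B = (d! · s / (T^d h))². -/
open MeasureTheory ProbabilityTheory Real Finset

/-! The mean squared error of the linear estimator is its squared bias plus its variance.
Independence and centering of the noise make the variance `C² Σ ρ_j² p(j/N)² Var w_j = C² N s²`.
For the bias, expand `y` at `t₀` to order `d` with Lagrange remainder: the discrete orthogonality
of `p` to the monomials of degree `< d` annihilates every Taylor term except the `d`-th, which the
normalisation `C` turns into exactly `y⁽ᵈ⁾(t₀)`, while each remainder is at most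
`M (NT/n)^(d+1) / (d+1)!`; summed against `|ρ_j p(j/N)|` this costs the factor `N g`. -/

section BiasVariance

variable {Ω : Type*} [MeasurableSpace Ω] {μ : Measure Ω} [IsProbabilityMeasure μ]

theorem integral_sub_const_sq_eq_variance_add {X : Ω → ℝ} (hX : MemLp X 2 μ) (c : ℝ) :
    ∫ ω, (X ω - c) ^ 2 ∂μ = variance X μ + (μ[X] - c) ^ 2 := by
  have h := variance_eq_sub (hX.sub (memLp_const c))
  rw [show X - (fun _ => c) = fun ω => X ω - c from rfl,
    variance_sub_const hX.aestronglyMeasurable,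
    integral_sub (hX.integrable one_le_two) (integrable_const c)] at h
  simp only [Pi.pow_apply, integral_const, probReal_univ, one_smul] at h
  linarith

theorem variance_const_add_sum_mul {ι : Type*} {s : Finset ι} {w : ι → Ω → ℝ}
    (hw : ∀ j ∈ s, MemLp (w j) 2 μ)
    (hindep : Set.Pairwise s fun i j => IndepFun (w i) (w j) μ) (b : ℝ) (a : ι → ℝ) :
    variance (fun ω => b + ∑ j ∈ s, a j * w j ω) μ
      = ∑ j ∈ s, a j ^ 2 * variance (w j) μ := by
  have hsum : (fun ω => ∑ j ∈ s, a j * w j ω) = ∑ j ∈ s, fun ω => a j * w j ω := by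
    ext ω; simp
  rw [variance_const_add (memLp_finsetSum s fun j hj => (hw j hj).const_mul (a j)).1, hsum,
    IndepFun.variance_sum (fun j hj => (hw j hj).const_mul (a j))
      fun i hi j hj hij =>
        (hindep hi hj hij).comp (measurable_const_mul _) (measurable_const_mul _)]
  exact sum_congr rfl fun j _ => variance_const_mul (a j) (w j) μ

theorem integral_const_add_sum_mul_sub_sq {ι : Type*} {s : Finset ι} {w : ι → Ω → ℝ}
    (hw : ∀ j ∈ s, MemLp (w j) 2 μ)
    (hindep : Set.Pairwise s fun i j => IndepFun (w i) (w j) μ)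
    (hmean : ∀ j ∈ s, μ[w j] = 0) (b c : ℝ) (a : ι → ℝ) :
    ∫ ω, (b + ∑ j ∈ s, a j * w j ω - c) ^ 2 ∂μ
      = (b - c) ^ 2 + ∑ j ∈ s, a j ^ 2 * variance (w j) μ := by
  have hsum := memLp_finsetSum s fun j hj => (hw j hj).const_mul (a j)
  have hL2 : MemLp (fun ω => b + ∑ j ∈ s, a j * w j ω) 2 μ := (memLp_const b).add hsum
  have hmean' : μ[fun ω => b + ∑ j ∈ s, a j * w j ω] = b := by
    rw [integral_add (integrable_const b) (hsum.integrable one_le_two),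
      integral_finsetSum s fun j hj => ((hw j hj).integrable one_le_two).const_mul (a j)]
    simp only [integral_const, probReal_univ, one_smul, integral_const_mul]
    rw [sum_eq_zero fun j hj => by rw [hmean j hj, mul_zero], add_zero]
  rw [integral_sub_const_sq_eq_variance_add hL2 c, hmean', variance_const_add_sum_mul hw hindep,
    add_comm]

end BiasVariance

theorem ProbabilityTheory.iIndepFun.pairwise_indepFun_Icc {Ω : Type*} [MeasurableSpace Ω]
    {μ : Measure Ω} {w : ℕ → Ω → ℝ} {N : ℕ}
    (h : iIndepFun (fun j : Fin N => w (j.1 + 1)) μ) :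
    Set.Pairwise (Icc 1 N : Set ℕ) fun i j => IndepFun (w i) (w j) μ := by
  intro i hi j hj hij
  simp only [coe_Icc, Set.mem_Icc] at hi hj
  have h' := h.indepFun (i := ⟨i - 1, by omega⟩) (j := ⟨j - 1, by omega⟩) (by simp; omega)
  rwa [Nat.sub_add_cancel hi.1, Nat.sub_add_cancel hj.1] at h'

theorem Set.Icc_eventuallyEq_Icc_of_lt {α : Type*} [LinearOrder α] [TopologicalSpace α]
    [OrderTopology α] {a b x u : α} (hxb : x ≤ b) (hu : u < x) :
    Set.Icc a x =ᶠ[nhds u] Set.Icc a b := by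
  filter_upwards [Iio_mem_nhds hu] with v hv
  exact propext ⟨fun h => ⟨h.1, h.2.trans hxb⟩, fun h => ⟨h.1, le_of_lt hv⟩⟩

theorem iteratedDerivWithin_congr_set {𝕜 F : Type*} [NontriviallyNormedField 𝕜]
    [NormedAddCommGroup F] [NormedSpace 𝕜 F] {f : 𝕜 → F} {s t : Set 𝕜} {x : 𝕜}
    (h : s =ᶠ[nhds x] t) (n : ℕ) :
    iteratedDerivWithin n f s x = iteratedDerivWithin n f t x := by
  simp only [iteratedDerivWithin_eq_iteratedFDerivWithin, iteratedFDerivWithin_congr_set h n]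

theorem abs_sub_taylorWithinEval_Icc_le {y : ℝ → ℝ} {a b M x : ℝ} {d : ℕ}
    (hy : ContDiffOn ℝ d y (Set.Icc a b))
    (hy' : DifferentiableOn ℝ (iteratedDerivWithin d y (Set.Icc a b)) (Set.Icc a b))
    (hM : ∀ t ∈ Set.Icc a b, |iteratedDerivWithin (d + 1) y (Set.Icc a b) t| ≤ M)
    (hx : x ∈ Set.Icc a b) :
    |y x - taylorWithinEval y d (Set.Icc a b) a x|
      ≤ M * (x - a) ^ (d + 1) / (d + 1).factorial := by
  rcases hx.1.eq_or_lt with rfl | hax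
  · simp
  have hsub : Set.Icc a x ⊆ Set.Icc a b := Set.Icc_subset_Icc_right hx.2
  -- Lagrange's remainder lives on `Icc a x`, whose derivatives agree with those on `Icc a b`
  -- at every point of `Ico a x`, where the two sets coincide locally.
  have hloc : ∀ u ∈ Set.Ico a x, ∀ k,
      iteratedDerivWithin k y (Set.Icc a x) u = iteratedDerivWithin k y (Set.Icc a b) u :=
    fun u hu => iteratedDerivWithin_congr_set (Set.Icc_eventuallyEq_Icc_of_lt hx.2 hu.2)
  have htaylor :
      taylorWithinEval y d (Set.Icc a x) a x = taylorWithinEval y d (Set.Icc a b) a x := by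
    simp only [taylor_within_apply, hloc a ⟨le_rfl, hax⟩]
  have hy'x : DifferentiableOn ℝ (iteratedDerivWithin d y (Set.Icc a x)) (Set.Ioo a x) :=
    (hy'.mono (Set.Ioo_subset_Icc_self.trans hsub)).congr fun u hu => hloc u ⟨hu.1.le, hu.2⟩ d
  obtain ⟨ξ, hξ, hrem⟩ := taylor_mean_remainder_lagrange hax.ne
    (by rw [Set.uIcc_of_le hax.le]; exact hy.mono hsub)
    (by rwa [Set.uIcc_of_le hax.le, Set.uIoo_of_le hax.le])
  rw [Set.uIcc_of_le hax.le] at hrem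
  rw [Set.uIoo_of_le hax.le] at hξ
  rw [← htaylor, hrem, hloc ξ ⟨hξ.1.le, hξ.2⟩, abs_div, abs_mul, abs_pow,
    abs_of_pos (sub_pos.2 hax), Nat.abs_cast]
  gcongr
  exact hM ξ (hsub (Set.Ioo_subset_Icc_self hξ))

theorem sum_mul_sum_range_of_moments_eq_zero {ι : Type*} (s : Finset ι) (a u : ι → ℝ)
    (c : ℕ → ℝ) {d : ℕ} (horth : ∀ k < d, ∑ j ∈ s, a j * u j ^ k = 0) :
    ∑ j ∈ s, a j * ∑ k ∈ range (d + 1), c k * u j ^ k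
      = c d * ∑ j ∈ s, a j * u j ^ d := by
  have hmoment : ∀ k, ∑ j ∈ s, a j * (c k * u j ^ k) = c k * ∑ j ∈ s, a j * u j ^ k :=
    fun k => by rw [mul_sum]; exact sum_congr rfl fun j _ => by ring
  simp_rw [mul_sum (range (d + 1))]
  rw [sum_comm, sum_range_succ, hmoment, sum_eq_zero fun k hk => by
    rw [hmoment, horth k (mem_range.mp hk), mul_zero], zero_add]

theorem abs_sum_mul_sub_iteratedDerivWithin_le {ι : Type*} {s : Finset ι} {a u : ι → ℝ}
    {d : ℕ}
    (horth : ∀ k < d, ∑ j ∈ s, a j * u j ^ k = 0) (hu : ∀ j ∈ s, u j ∈ Set.Icc 0 1)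
    {y : ℝ → ℝ} {t₀ δ M : ℝ} (hδ : 0 ≤ δ)
    (hy : ContDiffOn ℝ d y (Set.Icc t₀ (t₀ + δ)))
    (hy' : DifferentiableOn ℝ (iteratedDerivWithin d y (Set.Icc t₀ (t₀ + δ)))
      (Set.Icc t₀ (t₀ + δ)))
    (hM : ∀ t ∈ Set.Icc t₀ (t₀ + δ),
      |iteratedDerivWithin (d + 1) y (Set.Icc t₀ (t₀ + δ)) t| ≤ M) :
    |∑ j ∈ s, a j * y (t₀ + u j * δ) - δ ^ d / d.factorial
        * iteratedDerivWithin d y (Set.Icc t₀ (t₀ + δ)) t₀ * ∑ j ∈ s, a j * u j ^ d|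
      ≤ (∑ j ∈ s, |a j|) * (M * δ ^ (d + 1) / (d + 1).factorial) := by
  set S := Set.Icc t₀ (t₀ + δ)
  have hstep : ∀ j ∈ s, 0 ≤ u j * δ ∧ u j * δ ≤ δ := fun j hj =>
    ⟨mul_nonneg (hu j hj).1 hδ, mul_le_of_le_one_left hδ (hu j hj).2⟩
  have hM0 : 0 ≤ M := (abs_nonneg _).trans (hM t₀ ⟨le_rfl, by linarith⟩)
  have htaylor : ∀ v, taylorWithinEval y d S t₀ (t₀ + v * δ)
      = ∑ k ∈ range (d + 1), (δ ^ k / k.factorial * iteratedDerivWithin k y S t₀) * v ^ k :=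
    fun v => by
      rw [taylor_within_apply]
      exact sum_congr rfl fun k _ => by rw [smul_eq_mul]; ring
  have hpoly : ∑ j ∈ s, a j * taylorWithinEval y d S t₀ (t₀ + u j * δ)
      = δ ^ d / d.factorial * iteratedDerivWithin d y S t₀ * ∑ j ∈ s, a j * u j ^ d := by
    simp only [htaylor]
    exact sum_mul_sum_range_of_moments_eq_zero s a u _ horth
  rw [← hpoly, ← sum_sub_distrib, sum_mul]
  refine (abs_sum_le_sum_abs _ _).trans (sum_le_sum fun j hj => ?_)
  rw [← mul_sub, abs_mul]
  gcongr
  calc |y (t₀ + u j * δ) - taylorWithinEval y d S t₀ (t₀ + u j * δ)|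
      ≤ M * (u j * δ) ^ (d + 1) / (d + 1).factorial := by
        have hnode : t₀ + u j * δ ∈ S :=
          ⟨by linarith [hstep j hj], by linarith [hstep j hj]⟩
        simpa using abs_sub_taylorWithinEval_Icc_le hy hy' hM hnode
    _ ≤ M * δ ^ (d + 1) / (d + 1).factorial := by
        gcongr
        · exact (hstep j hj).1
        · exact (hstep j hj).2

theorem sq_filter_bias_le {N n d : ℕ} (hN : 0 < N) (hNn : N ≤ n) {T t₀ : ℝ} (hT : 0 < T)
    {a : ℕ → ℝ} {H G M : ℝ} {y : ℝ → ℝ}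
    (horth : ∀ k < d, ∑ j ∈ Icc 1 N, a j * ((j : ℝ) / N) ^ k = 0)
    (hH : ∑ j ∈ Icc 1 N, a j * ((j : ℝ) / N) ^ d = N * H) (hHne : H ≠ 0)
    (hG : ∑ j ∈ Icc 1 N, |a j| = N * G)
    (hy : ContDiffOn ℝ d y (Set.Icc t₀ (t₀ + N * T / n)))
    (hy' : DifferentiableOn ℝ (iteratedDerivWithin d y (Set.Icc t₀ (t₀ + N * T / n)))
      (Set.Icc t₀ (t₀ + N * T / n)))
    (hM : ∀ t ∈ Set.Icc t₀ (t₀ + N * T / n),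
      |iteratedDerivWithin (d + 1) y (Set.Icc t₀ (t₀ + N * T / n)) t| ≤ M) :
    ((d.factorial : ℝ) * n ^ d / (N ^ (d + 1) * T ^ d * H)
        * ∑ j ∈ Icc 1 N, a j * y (t₀ + j * T / n)
        - iteratedDerivWithin d y (Set.Icc t₀ (t₀ + N * T / n)) t₀) ^ 2
      ≤ (M * T / (d + 1)) ^ 2 * (G / H) ^ 2 * N ^ 2 / n ^ 2 := by
  have hNR : (0 : ℝ) < N := by exact_mod_cast hN
  have hnR : (0 : ℝ) < n := by exact_mod_cast hN.trans_le hNn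
  have hu : ∀ j ∈ Icc 1 N, (j : ℝ) / N ∈ Set.Icc 0 1 := fun j hj =>
    ⟨by positivity, div_le_one_of_le₀ (by exact_mod_cast (mem_Icc.mp hj).2) hNR.le⟩
  have hbias := abs_sum_mul_sub_iteratedDerivWithin_le horth hu (by positivity) hy hy' hM
  have hnodes : ∀ j : ℕ, t₀ + (j : ℝ) / N * (N * T / n) = t₀ + j * T / n := fun j => by
    field_simp
  simp only [hnodes, hH, hG] at hbias
  set C : ℝ := (d.factorial : ℝ) * n ^ d / (N ^ (d + 1) * T ^ d * H)
  set θ := iteratedDerivWithin d y (Set.Icc t₀ (t₀ + N * T / n)) t₀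
  have hC : C * ((N * T / n) ^ d / d.factorial * (N * H)) = 1 := by
    simp only [C, div_pow, mul_pow]
    field_simp
    ring
  have hfactor : C * ∑ j ∈ Icc 1 N, a j * y (t₀ + j * T / n) - θ
      = C * (∑ j ∈ Icc 1 N, a j * y (t₀ + j * T / n)
          - (N * T / n) ^ d / d.factorial * θ * (N * H)) := by
    linear_combination θ * hC
  calc (C * ∑ j ∈ Icc 1 N, a j * y (t₀ + j * T / n) - θ) ^ 2
      ≤ C ^ 2 * (N * G * (M * (N * T / n) ^ (d + 1) / (d + 1).factorial)) ^ 2 := by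
        rw [hfactor, mul_pow]
        exact mul_le_mul_of_nonneg_left (sq_le_sq' (abs_le.mp hbias).1 (abs_le.mp hbias).2)
          (sq_nonneg C)
    _ = (M * T / (d + 1)) ^ 2 * (G / H) ^ 2 * N ^ 2 / n ^ 2 := by
        simp only [C, Nat.factorial_succ, Nat.cast_mul, div_pow, mul_pow]
        field_simp
        push_cast
        ring

theorem mse_of_estimated_derivative_general
    {Ω : Type*} [MeasurableSpace Ω] (μ : Measure Ω) [IsProbabilityMeasure μ]
    (N n : ℕ) (hN : 0 < N) (hNn : N ≤ n)
    (d : ℕ)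
    (T : ℝ) (hT : 0 < T) (t₀ : ℝ)
    -- filter setting
    (ρ : ℕ → ℝ) (hρ : ∀ j ∈ Finset.Icc 1 N, 0 < ρ j)
    (p : Polynomial ℝ)
    (horth : ∀ k < d,
      (1 / N : ℝ) * ∑ j ∈ Finset.Icc 1 N,
        ρ j * p.eval ((j : ℝ) / N) * ((j : ℝ) / N) ^ k = 0)
    (H G : ℝ)
    (hH : H = (1 / N : ℝ) * ∑ j ∈ Finset.Icc 1 N,
        ρ j * p.eval ((j : ℝ) / N) * ((j : ℝ) / N) ^ d)
    (hHne : H ≠ 0)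
    (hG : G = (1 / N : ℝ) * ∑ j ∈ Finset.Icc 1 N, ρ j * |p.eval ((j : ℝ) / N)|)
    -- regularity of y on the window
    (y : ℝ → ℝ) (M : ℝ)
    (hy : ∀ k ≤ d, ∀ t ∈ Set.Icc t₀ (t₀ + N * T / n),
      DifferentiableWithinAt ℝ
        (iteratedDerivWithin k y (Set.Icc t₀ (t₀ + N * T / n)))
        (Set.Icc t₀ (t₀ + N * T / n)) t)
    (hM : ∀ t ∈ Set.Icc t₀ (t₀ + N * T / n),
      |iteratedDerivWithin (d + 1) y (Set.Icc t₀ (t₀ + N * T / n)) t| ≤ M)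
    -- observations: signal plus independent centered square-integrable noise
    (w : ℕ → Ω → ℝ)
    (hwindep : iIndepFun
      (fun j : Fin N => w (j.1 + 1)) μ)
    (hwL2 : ∀ j ∈ Finset.Icc 1 N, MemLp (w j) 2 μ)
    (hwmean : ∀ j ∈ Finset.Icc 1 N, ∫ ω, w j ω ∂μ = 0)
    (z : ℕ → Ω → ℝ)
    (hz : ∀ j ∈ Finset.Icc 1 N, z j = fun ω => y (t₀ + j * T / n) + w j ω)
    -- the filter variance constant
    (s : ℝ)
    (hs2 : s ^ 2 = (1 / N : ℝ) * ∑ j ∈ Finset.Icc 1 N,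
        (ρ j) ^ 2 * (p.eval ((j : ℝ) / N)) ^ 2 * variance (w j) μ)
    -- the estimator
    (C : ℝ) (hC : C = (d.factorial : ℝ) * n ^ d / (N ^ (d + 1) * T ^ d * H))
    (xhat : Ω → ℝ)
    (hxhat : xhat = fun ω => C * ∑ j ∈ Finset.Icc 1 N, ρ j * p.eval ((j : ℝ) / N) * z j ω)
    -- the constants in the bound
    (A B : ℝ)
    (hA : A = (M * T / (d + 1)) ^ 2 * (G / H) ^ 2)
    (hB : B = ((d.factorial : ℝ) * s / (T ^ d * H)) ^ 2) :
    ∫ ω, (xhat ω - iteratedDerivWithin d y (Set.Icc t₀ (t₀ + N * T / n)) t₀) ^ 2 ∂μ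
      ≤ A * (N : ℝ) ^ 2 / (n : ℝ) ^ 2
        + B * (n : ℝ) ^ (2 * d) / (N : ℝ) ^ (2 * d + 1) := by
  set a : ℕ → ℝ := fun j => ρ j * p.eval ((j : ℝ) / N)
  have hxhat_affine : xhat = fun ω => C * ∑ j ∈ Icc 1 N, a j * y (t₀ + j * T / n)
      + ∑ j ∈ Icc 1 N, C * a j * w j ω := by
    rw [hxhat]
    funext ω
    rw [mul_sum, mul_sum, ← sum_add_distrib]
    exact sum_congr rfl fun j hj => by rw [hz j hj]; ring
  have hbias : (C * ∑ j ∈ Icc 1 N, a j * y (t₀ + j * T / n)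
      - iteratedDerivWithin d y (Set.Icc t₀ (t₀ + N * T / n)) t₀) ^ 2
      ≤ A * (N : ℝ) ^ 2 / (n : ℝ) ^ 2 := by
    rw [hC, hA]
    refine sq_filter_bias_le hN hNn hT
      (fun k hk => (mul_eq_zero.mp (horth k hk)).resolve_left (by positivity))
      (by rw [hH]; field_simp; rfl) hHne ?_
      (contDiffOn_of_differentiableOn_deriv fun k hk => hy k (by exact_mod_cast hk))
      (hy d le_rfl) hM
    rw [hG]
    field_simp
    exact sum_congr rfl fun j hj => by rw [abs_mul, abs_of_pos (hρ j hj)]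
  have hvar : ∑ j ∈ Icc 1 N, (C * a j) ^ 2 * variance (w j) μ
      = B * (n : ℝ) ^ (2 * d) / (N : ℝ) ^ (2 * d + 1) := by
    have hs2' : ∑ j ∈ Icc 1 N, a j ^ 2 * variance (w j) μ = N * s ^ 2 := by
      rw [hs2]
      field_simp
      exact sum_congr rfl fun j _ => by ring
    simp only [mul_pow, mul_assoc, ← mul_sum]
    rw [hs2', hC, hB]
    field_simp
    ring
  rw [hxhat_affine]
  beta_reduce
  rw [integral_const_add_sum_mul_sub_sq hwL2 hwindep.pairwise_indepFun_Icc hwmean,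
    hvar]
  exact add_le_add_left hbias _

/-- Mean squared error of the estimated derivative (Theorem: mse-d-i). -/
theorem mse_of_estimated_derivative
    {Ω : Type*} [MeasurableSpace Ω] (μ : Measure Ω) [IsProbabilityMeasure μ]
    (N n : ℕ) (hN : 0 < N) (hNn : N ≤ n)
    (d : ℕ) (hd : d + 1 ≤ N)
    (T : ℝ) (hT : 0 < T) (t₀ : ℝ) (ht₀ : 0 ≤ t₀) (ht₁ : t₀ + N * T / n ≤ T)
    -- filter setting
    (ρ : ℕ → ℝ) (hρ : ∀ j ∈ Finset.Icc 1 N, 0 < ρ j)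
    (p : Polynomial ℝ) (hp : p.degree = d)
    (horth : ∀ k < d,
      (1 / N : ℝ) * ∑ j ∈ Finset.Icc 1 N,
        ρ j * p.eval ((j : ℝ) / N) * ((j : ℝ) / N) ^ k = 0)
    (H G : ℝ)
    (hH : H = (1 / N : ℝ) * ∑ j ∈ Finset.Icc 1 N,
        ρ j * p.eval ((j : ℝ) / N) * ((j : ℝ) / N) ^ d)
    (hHne : H ≠ 0)
    (hG : G = (1 / N : ℝ) * ∑ j ∈ Finset.Icc 1 N, ρ j * |p.eval ((j : ℝ) / N)|)
    -- regularity of y on the window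
    (y : ℝ → ℝ) (M : ℝ)
    (hy : ∀ k ≤ d, ∀ t ∈ Set.Icc t₀ (t₀ + N * T / n),
      DifferentiableWithinAt ℝ
        (iteratedDerivWithin k y (Set.Icc t₀ (t₀ + N * T / n)))
        (Set.Icc t₀ (t₀ + N * T / n)) t)
    (hM : ∀ t ∈ Set.Icc t₀ (t₀ + N * T / n),
      |iteratedDerivWithin (d + 1) y (Set.Icc t₀ (t₀ + N * T / n)) t| ≤ M)
    -- observations: signal plus independent centered square-integrable noise
    (w : ℕ → Ω → ℝ)
    (hwindep : iIndepFun
      (fun j : Fin N => w (j.1 + 1)) μ)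
    (hwL2 : ∀ j ∈ Finset.Icc 1 N, MemLp (w j) 2 μ)
    (hwmean : ∀ j ∈ Finset.Icc 1 N, ∫ ω, w j ω ∂μ = 0)
    (z : ℕ → Ω → ℝ)
    (hz : ∀ j ∈ Finset.Icc 1 N, z j = fun ω => y (t₀ + j * T / n) + w j ω)
    -- the filter variance constant
    (s : ℝ) (hs : 0 ≤ s)
    (hs2 : s ^ 2 = (1 / N : ℝ) * ∑ j ∈ Finset.Icc 1 N,
        (ρ j) ^ 2 * (p.eval ((j : ℝ) / N)) ^ 2 * variance (w j) μ)
    -- the estimator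
    (C : ℝ) (hC : C = (d.factorial : ℝ) * n ^ d / (N ^ (d + 1) * T ^ d * H))
    (xhat : Ω → ℝ)
    (hxhat : xhat = fun ω => C * ∑ j ∈ Finset.Icc 1 N, ρ j * p.eval ((j : ℝ) / N) * z j ω)
    -- the constants in the bound
    (A B : ℝ)
    (hA : A = (M * T / (d + 1)) ^ 2 * (G / H) ^ 2)
    (hB : B = ((d.factorial : ℝ) * s / (T ^ d * H)) ^ 2) :
    ∫ ω, (xhat ω - iteratedDerivWithin d y (Set.Icc t₀ (t₀ + N * T / n)) t₀) ^ 2 ∂μ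
      ≤ A * (N : ℝ) ^ 2 / (n : ℝ) ^ 2
        + B * (n : ℝ) ^ (2 * d) / (N : ℝ) ^ (2 * d + 1) :=
  mse_of_estimated_derivative_general μ N n hN hNn d T hT t₀ ρ hρ p horth H G hH hHne hG y M hy hM w
    hwindep hwL2 hwmean z hz s hs2 C hC xhat hxhat A B hA hB
end
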